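/- arXiv:1503.04016 — 2 statements merged into one kernel-verified Lean document; each statement's English description precedes it below -/
import Mathlib

section
/- For real p > 0 and real x, y, the function p ↦ B(x,y;p) is strictly decreasing. -/
open MeasureTheory

noncomputable def genBetaReal (x y p : ℝ) : ℝ :=
  ∫ t in Set.Ioo (0:ℝ) 1,
    t ^ (x - 1) * (1 - t) ^ (y - 1) * Real.exp (-p / (4 * t * (1 - t)))

/-!
For `0 < t < 1` the integrand `t^(x-1) (1-t)^(y-1) exp(-p/(4t(1-t)))` is positive and strictly
decreasing in `p`, so the integrals are strictly decreasing as soon as they exist. They exist for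
`p > 0`: by `1/(t(1-t)) = 1/t + 1/(1-t)` the integrand is the product of
`t^(x-1) exp(-p/(4t))` and `(1-t)^(y-1) exp(-p/(4(1-t)))`, and `u^a exp(-c/u)` is bounded on
`(0, 1]` because `exp(c/u)` dominates every power of `1/u`.
-/

open Real Set

theorem MeasureTheory.setIntegral_lt_setIntegral_of_forall_lt {X : Type*} [MeasurableSpace X]
    {μ : Measure X} {s : Set X} {f g : X → ℝ} (hs : MeasurableSet s) (hμs : μ s ≠ 0)
    (hf : IntegrableOn f s μ) (hg : IntegrableOn g s μ) (hlt : ∀ x ∈ s, f x < g x) :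
    ∫ x in s, f x ∂μ < ∫ x in s, g x ∂μ := by
  have hpos : ∀ x ∈ s, 0 < g x - f x := fun x hx => sub_pos.mpr (hlt x hx)
  rw [← sub_pos, ← integral_sub hg hf, setIntegral_pos_iff_support_of_nonneg_ae
    (ae_restrict_of_forall_mem hs fun x hx => (hpos x hx).le) (hg.sub hf)]
  exact (pos_iff_ne_zero.mpr hμs).trans_le (measure_mono fun x hx => ⟨(hpos x hx).ne', hx⟩)

lemma Real.rpow_mul_exp_neg_div_le (a : ℝ) {c : ℝ} (hc : 0 < c) {n : ℕ} (hn : -a ≤ n)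
    {u : ℝ} (hu₀ : 0 < u) (hu₁ : u ≤ 1) : u ^ a * exp (-c / u) ≤ n.factorial / c ^ n := by
  have hpow : u ^ a ≤ (u ^ n)⁻¹ := by
    rw [← rpow_natCast, ← rpow_neg hu₀.le]
    exact rpow_le_rpow_of_exponent_ge hu₀ hu₁ (by linarith)
  have hexp : (c / u) ^ n / n.factorial ≤ exp (c / u) :=
    pow_div_factorial_le_exp _ (by positivity) n
  rw [neg_div, exp_neg, le_div_iff₀ (by positivity)]
  calc u ^ a * (exp (c / u))⁻¹ * c ^ n
      ≤ (u ^ n)⁻¹ * (exp (c / u))⁻¹ * c ^ n := by gcongr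
    _ = (c / u) ^ n / exp (c / u) := by rw [div_pow]; field_simp
    _ ≤ n.factorial := by
      rw [div_le_iff₀ (exp_pos _)]
      rwa [div_le_iff₀ (by positivity), mul_comm] at hexp

noncomputable def genBetaIntegrand (x y p t : ℝ) : ℝ :=
  t ^ (x - 1) * (1 - t) ^ (y - 1) * exp (-p / (4 * t * (1 - t)))

section genBetaIntegrand

variable (x y : ℝ) {t : ℝ}

lemma genBetaIntegrand_eq_mul (p : ℝ) (ht : t ∈ Ioo 0 1) :
    genBetaIntegrand x y p t =
      (t ^ (x - 1) * exp (-(p / 4) / t)) * ((1 - t) ^ (y - 1) * exp (-(p / 4) / (1 - t))) := by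
  have h₀ : t ≠ 0 := ht.1.ne'
  have h₁ : 1 - t ≠ 0 := (sub_pos.mpr ht.2).ne'
  rw [genBetaIntegrand, show -p / (4 * t * (1 - t)) = -(p / 4) / t + -(p / 4) / (1 - t) by
    field_simp; ring, exp_add]
  ring

lemma genBetaIntegrand_strictAnti (ht : t ∈ Ioo 0 1) :
    StrictAnti fun p => genBetaIntegrand x y p t := by
  intro p q hpq
  have h₀ : 0 < t := ht.1
  have h₁ : 0 < 1 - t := sub_pos.mpr ht.2
  dsimp only [genBetaIntegrand]
  gcongr

lemma integrableOn_genBetaIntegrand {p : ℝ} (hp : 0 < p) :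
    IntegrableOn (genBetaIntegrand x y p) (Ioo 0 1) := by
  obtain ⟨m, hm⟩ := exists_nat_ge (-(x - 1))
  obtain ⟨n, hn⟩ := exists_nat_ge (-(y - 1))
  have hc : 0 < p / 4 := by positivity
  have hmeas : Measurable (genBetaIntegrand x y p) := by unfold genBetaIntegrand; fun_prop
  refine IntegrableOn.of_bound measure_Ioo_lt_top hmeas.aestronglyMeasurable
    (m.factorial / (p / 4) ^ m * (n.factorial / (p / 4) ^ n))
    (ae_restrict_of_forall_mem measurableSet_Ioo fun t ht => ?_)
  have h₀ : 0 < t := ht.1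
  have h₁ : 0 < 1 - t := sub_pos.mpr ht.2
  rw [genBetaIntegrand_eq_mul x y p ht, norm_of_nonneg (by positivity)]
  gcongr
  · exact rpow_mul_exp_neg_div_le _ hc hm h₀ ht.2.le
  · exact rpow_mul_exp_neg_div_le _ hc hn h₁ (by linarith)

end genBetaIntegrand

theorem genBeta_strictAnti (x y : ℝ) :
    StrictAntiOn (fun p => genBetaReal x y p) (Set.Ioi (0:ℝ)) := by
  intro p hp q hq hpq
  exact setIntegral_lt_setIntegral_of_forall_lt measurableSet_Ioo (by simp)
    (integrableOn_genBetaIntegrand x y hq) (integrableOn_genBetaIntegrand x y hp)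
    fun t ht => genBetaIntegrand_strictAnti x y ht hpq
end

section
/- For real a > 0, the cubic equation t(1-t)² + (a/4)(1-2t) = 0 has three real roots: exactly one root t₀ in the open interval (0,1), one root t₁ > 1, and one root t₂ < 0. -/
/-!
The polynomial `f(t) = t(1-t)² + (a/4)(1-2t)` is a monic cubic with `f(0) = a/4 > 0`,
`f(1) = -a/4 < 0`, `f(-(1+a)) < 0` and `f(2+a) > 0`, so the intermediate value theorem gives a
root in each of `(-(1+a), 0)`, `(0, 1)` and `(1, 2+a)`. A monic cubic with three distinct roots
has no others.
-/

open Set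

theorem eq_or_eq_or_eq_of_monic_cubic {R : Type*} [CommRing R] [IsDomain R]
    {p : R → R} {b c d : R} (hp : ∀ x, p x = x ^ 3 + b * x ^ 2 + c * x + d)
    {r s u t : R} (hrs : r ≠ s) (hru : r ≠ u) (hsu : s ≠ u)
    (hr : p r = 0) (hs : p s = 0) (hu : p u = 0) (ht : p t = 0) :
    t = r ∨ t = s ∨ t = u := by
  -- `q(x, r) = (p x - p r) / (x - r)`; comparing `q(s, r)` with `q(u, r)` pins down `b`,
  -- and then `q(t, r) - q(s, r) = (t - s)(t - u)`.
  have hqr : ∀ x, x ≠ r → p x = 0 → x ^ 2 + x * r + r ^ 2 + b * (x + r) + c = 0 := by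
    intro x hx hpx
    have hdiff : (x - r) * (x ^ 2 + x * r + r ^ 2 + b * (x + r) + c) = 0 := by
      rw [hp] at hpx hr
      linear_combination hpx - hr
    exact (mul_eq_zero.mp hdiff).resolve_left (sub_ne_zero.mpr hx)
  have hqs := hqr s hrs.symm hs
  have hqu := hqr u hru.symm hu
  have hb : b = -(r + s + u) := by
    have : (s - u) * (r + s + u + b) = 0 := by linear_combination hqs - hqu
    linear_combination (mul_eq_zero.mp this).resolve_left (sub_ne_zero.mpr hsu)
  by_cases htr : t = r
  · exact Or.inl htr
  have : (t - s) * (t - u) = 0 := by linear_combination hqr t htr ht - hqs - (t - s) * hb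
  rcases mul_eq_zero.mp this with h | h
  · exact Or.inr (Or.inl (sub_eq_zero.mp h))
  · exact Or.inr (Or.inr (sub_eq_zero.mp h))

noncomputable def saddleCubic (a t : ℝ) : ℝ := t * (1 - t) ^ 2 + (a / 4) * (1 - 2 * t)

theorem saddleCubic_eq (a t : ℝ) :
    saddleCubic a t = t ^ 3 + (-2) * t ^ 2 + (1 - a / 2) * t + a / 4 := by
  unfold saddleCubic; ring

theorem continuous_saddleCubic (a : ℝ) : Continuous (saddleCubic a) := by
  unfold saddleCubic; fun_prop

theorem saddleCubic_zero (a : ℝ) : saddleCubic a 0 = a / 4 := by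
  simp [saddleCubic]

theorem saddleCubic_one (a : ℝ) : saddleCubic a 1 = -(a / 4) := by
  unfold saddleCubic; ring

theorem saddleCubic_neg_one_sub_neg {a : ℝ} (ha : 0 < a) : saddleCubic a (-(1 + a)) < 0 := by
  unfold saddleCubic; nlinarith [sq_nonneg a, pow_pos ha 3]

theorem saddleCubic_two_add_pos {a : ℝ} (ha : 0 < a) : 0 < saddleCubic a (2 + a) := by
  unfold saddleCubic; nlinarith [sq_nonneg a, pow_pos ha 3]

theorem saddle_cubic_roots (a : ℝ) (ha : 0 < a) :
    ∃ t0 t1 t2 : ℝ,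
      t0 ∈ Set.Ioo (0:ℝ) 1 ∧ t0 * (1 - t0)^2 + (a/4) * (1 - 2*t0) = 0 ∧
      1 < t1 ∧ t1 * (1 - t1)^2 + (a/4) * (1 - 2*t1) = 0 ∧
      t2 < 0 ∧ t2 * (1 - t2)^2 + (a/4) * (1 - 2*t2) = 0 ∧
      ∀ t : ℝ, t * (1 - t)^2 + (a/4) * (1 - 2*t) = 0 → t = t0 ∨ t = t1 ∨ t = t2 := by
  have hf := continuous_saddleCubic a
  have hzero := saddleCubic_zero a
  have hone := saddleCubic_one a
  obtain ⟨t0, ht0, hr0⟩ := intermediate_value_Ioo' zero_le_one hf.continuousOn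
    (show (0 : ℝ) ∈ Ioo _ _ by rw [hzero, hone]; constructor <;> linarith)
  obtain ⟨t1, ht1, hr1⟩ := intermediate_value_Ioo (by linarith : (1 : ℝ) ≤ 2 + a)
    hf.continuousOn
    (show (0 : ℝ) ∈ Ioo _ _ by rw [hone]; exact ⟨by linarith, saddleCubic_two_add_pos ha⟩)
  obtain ⟨t2, ht2, hr2⟩ := intermediate_value_Ioo (by linarith : -(1 + a) ≤ (0 : ℝ))
    hf.continuousOn
    (show (0 : ℝ) ∈ Ioo _ _ by rw [hzero]; exact ⟨saddleCubic_neg_one_sub_neg ha, by linarith⟩)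
  refine ⟨t0, t1, t2, ht0, hr0, ht1.1, hr1, ht2.2, hr2, fun t ht => ?_⟩
  exact eq_or_eq_or_eq_of_monic_cubic (saddleCubic_eq a) (by linarith [ht0.2, ht1.1])
    (by linarith [ht0.1, ht2.2]) (by linarith [ht1.1, ht2.2]) hr0 hr1 hr2 ht
end
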